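/- If there exists a code C ⊆ {0,...,k}^n such that any single substitution error occurring in channel i of the ordered composite channel can be corrected, then there exists a code C' ⊆ {0,...,k}^n of the same cardinality correcting any single substitution error in channel i+1; in particular the maximal cardinalities S_k(n; e_i) for single-error correction are equal for all channels i ∈ {0,...,k-1}. -/

import Mathlib

/-- Row `j` of the decomposition of a `k`-resolution composite binary sequence
`s ∈ {0,…,k}^n`: position `p` of row `j` is `1` iff `s p ≥ k - j`
(so letter `i` decomposes to the column `0^(k-i) 1^i`). -/
def decompRow (k n : ℕ) (s : Fin n → Fin (k + 1)) (j : Fin k) (p : Fin n) : Bool :=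
  decide (k - (j : ℕ) ≤ (s p : ℕ))

/-- A column `c : Fin k → Bool` is valid (reconstructible) iff it is nondecreasing,
i.e. of the form `0^(k-i) 1^i`. -/
def validCol (k : ℕ) (c : Fin k → Bool) : Prop :=
  ∀ j j' : Fin k, j ≤ j' → c j = true → c j' = true

/-- The letter reconstructed from a column: the number of ones in the column. -/
def reconAt (k : ℕ) (c : Fin k → Bool) : ℕ :=
  (Finset.univ.filter fun j => c j = true).card

/-- The composite error ball of radius `(e 0, …, e (k-1))` centered at `s`:
all valid reconstructions `y` of rows `r` where row `j` differs from the `j`-th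
decomposed row of `s` in at most `e j` positions. -/
def ballTuple (k n : ℕ) (e : Fin k → ℕ) (s : Fin n → Fin (k + 1)) :
    Set (Fin n → Fin (k + 1)) :=
  { y | ∃ r : Fin k → Fin n → Bool,
      (∀ j, hammingDist (r j) (decompRow k n s j) ≤ e j) ∧
      (∀ p, validCol k (fun j => r j p)) ∧
      (∀ p, (y p : ℕ) = reconAt k (fun j => r j p)) }

/-- The composite error ball of total radius `e` centered at `s`: all valid
reconstructions `y` of rows `r` differing from the decomposed rows of `s`
in at most `e` positions in total. -/
def ballTotal (k n : ℕ) (e : ℕ) (s : Fin n → Fin (k + 1)) :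
    Set (Fin n → Fin (k + 1)) :=
  { y | ∃ r : Fin k → Fin n → Bool,
      (∑ j, hammingDist (r j) (decompRow k n s j)) ≤ e ∧
      (∀ p, validCol k (fun j => r j p)) ∧
      (∀ p, (y p : ℕ) = reconAt k (fun j => r j p)) }

instance (k : ℕ) (c : Fin k → Bool) : Decidable (validCol k c) := by
  unfold validCol; infer_instance

/-- The possibly-invalid reconstruction of a column: `some` of the number of ones if
the column is nondecreasing, and `none` (the invalid symbol `?`) otherwise. -/
def reconOpt (k : ℕ) (c : Fin k → Bool) : Option (Fin (k + 1)) :=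
  if validCol k c then
    some ⟨reconAt k c,
      Nat.lt_succ_of_le ((Finset.card_filter_le _ _).trans (by simp))⟩
  else none

/-- The set of channel outputs (reconstructions, possibly containing the invalid
symbol `?`) obtainable from codeword `s` when at most one bit is flipped in row `i`
and all other rows are transmitted without error. -/
def channelOut (k n : ℕ) (i : Fin k) (s : Fin n → Fin (k + 1)) :
    Set (Fin n → Option (Fin (k + 1))) :=
  { y | ∃ r : Fin k → Fin n → Bool,
      hammingDist (r i) (decompRow k n s i) ≤ 1 ∧
      (∀ j, j ≠ i → r j = decompRow k n s j) ∧
      ∀ p, y p = reconOpt k (fun j => r j p) }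

/-- `C` corrects any single substitution error occurring in channel `i`: the sets of
possible channel outputs of distinct codewords are disjoint. -/
def isCECC (k n : ℕ) (i : Fin k) (C : Set (Fin n → Fin (k + 1))) : Prop :=
  ∀ c ∈ C, ∀ c' ∈ C, c ≠ c' → Disjoint (channelOut k n i c) (channelOut k n i c')

/-- The maximal cardinality `S_k(n; e_i)` of a code correcting a single substitution
error in channel `i`. -/
noncomputable def maxCECC (k n : ℕ) (i : Fin k) : ℕ :=
  sSup {m : ℕ | ∃ C : Set (Fin n → Fin (k + 1)), isCECC k n i C ∧ C.ncard = m}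

/-!
Decrementing every letter modulo `k + 1` acts on the decomposition columns `0^(k-a) 1^a` by an
invertible column map: shift the column down one row, and complement it if the bit shifted out
was `0`. This map sends valid columns to valid ones and invalid ones to invalid ones, and it moves
a bit flip in row `i` to a bit flip in row `i + 1`. Hence it transports the possible outputs of
channel `i` for a codeword `c` bijectively onto those of channel `i + 1` for `c - 1`, so
`C ↦ C - 1` turns codes for channel `i` into codes for channel `i + 1` and back.
-/

section Columns

variable {k : ℕ}

def letterCol (k : ℕ) (a : Fin (k + 1)) : Fin k → Bool := fun j => decide (k - (j : ℕ) ≤ (a : ℕ))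

def flipBit (i : Fin k) (c : Fin k → Bool) : Fin k → Bool := Function.update c i (!c i)

theorem letterCol_injective : Function.Injective (letterCol k) := by
  intro a b hab
  by_contra hne
  wlog hlt : a < b generalizing a b
  · exact this hab.symm (Ne.symm hne) (lt_of_le_of_ne (not_lt.1 hlt) (Ne.symm hne))
  rw [Fin.lt_def] at hlt
  have := congrFun hab ⟨k - b, by omega⟩
  simp only [letterCol, decide_eq_decide] at this
  omega

theorem validCol_letterCol (a : Fin (k + 1)) : validCol k (letterCol k a) := by
  intro j j' hjj' hj
  simp only [letterCol, decide_eq_true_eq] at hj ⊢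
  rw [Fin.le_def] at hjj'
  omega

theorem reconAt_le (c : Fin k → Bool) : reconAt k c ≤ k :=
  (Finset.card_filter_le _ _).trans (by simp)

theorem letterCol_reconAt {c : Fin k → Bool} (hc : validCol k c) :
    letterCol k ⟨reconAt k c, Nat.lt_succ_of_le (reconAt_le c)⟩ = c := by
  funext j
  rw [letterCol, Bool.eq_iff_iff, decide_eq_true_iff]
  constructor
  · intro hj
    by_contra hcj
    have hsub : Finset.univ.filter (fun j' => c j' = true) ⊆ Finset.Ioi j := fun j' hj' => by
      simp only [Finset.mem_filter, Finset.mem_univ, true_and] at hj'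
      exact Finset.mem_Ioi.2 (lt_of_not_ge fun hle => hcj (hc j' j hle hj'))
    have := Finset.card_le_card hsub
    rw [Fin.card_Ioi] at this
    simp only [reconAt] at hj
    omega
  · intro hj
    have hsub : Finset.Ici j ⊆ Finset.univ.filter (fun j' => c j' = true) := fun j' hj' => by
      simpa using hc j j' (Finset.mem_Ici.1 hj') hj
    have := Finset.card_le_card hsub
    rw [Fin.card_Ici] at this
    exact this

theorem validCol_iff_mem_range {c : Fin k → Bool} : validCol k c ↔ c ∈ Set.range (letterCol k) :=
  ⟨fun hc => ⟨_, letterCol_reconAt hc⟩, by rintro ⟨a, rfl⟩; exact validCol_letterCol a⟩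

theorem reconOpt_letterCol (a : Fin (k + 1)) : reconOpt k (letterCol k a) = some a := by
  rw [reconOpt, if_pos (validCol_letterCol a)]
  exact congrArg some (letterCol_injective (letterCol_reconAt (validCol_letterCol a)))

end Columns

theorem hammingDist_congr {ι β γ : Type*} [Fintype ι] [DecidableEq β] [DecidableEq γ]
    {x y : ι → β} {u v : ι → γ} (h : ∀ p, x p ≠ y p ↔ u p ≠ v p) :
    hammingDist x y = hammingDist u v := by
  simp only [hammingDist, h]

theorem ncard_preimage_comp_equiv {ι α β : Type*} (e : α ≃ β) (C : Set (ι → β)) :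
    ((e ∘ ·) ⁻¹' C).ncard = C.ncard :=
  Set.ncard_preimage_of_injective_subset_range e.injective.comp_left
    ((e.surjective.comp_left (α := ι)).range_eq ▸ Set.subset_univ C)

structure ChannelTransport {k : ℕ} (T : (Fin k → Bool) ≃ (Fin k → Bool))
    (e : Fin (k + 1) ≃ Fin (k + 1)) (i i' : Fin k) : Prop where
  apply_letterCol : ∀ a, T (letterCol k a) = letterCol k (e a)
  apply_flipBit : ∀ c, T (flipBit i c) = flipBit i' (T c)

namespace ChannelTransport

variable {k n : ℕ} {T : (Fin k → Bool) ≃ (Fin k → Bool)} {e : Fin (k + 1) ≃ Fin (k + 1)}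
  {i i' : Fin k}

theorem symm (hT : ChannelTransport T e i i') : ChannelTransport T.symm e.symm i' i where
  apply_letterCol a := T.symm_apply_eq.2 (by rw [hT.apply_letterCol, e.apply_symm_apply])
  apply_flipBit c := T.symm_apply_eq.2 (by rw [hT.apply_flipBit, T.apply_symm_apply])

theorem reconOpt_apply (hT : ChannelTransport T e i i') (c : Fin k → Bool) :
    reconOpt k (T c) = (reconOpt k c).map e := by
  by_cases hc : c ∈ Set.range (letterCol k)
  · obtain ⟨a, rfl⟩ := hc
    rw [hT.apply_letterCol, reconOpt_letterCol, reconOpt_letterCol, Option.map_some]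
  · have hTc : T c ∉ Set.range (letterCol k) := by
      rintro ⟨b, hb⟩
      refine hc ⟨e.symm b, T.injective ?_⟩
      rw [hT.apply_letterCol, e.apply_symm_apply, hb]
    rw [← validCol_iff_mem_range] at hc hTc
    rw [reconOpt, if_neg hTc, reconOpt, if_neg hc, Option.map_none]

theorem apply_of_eqOn (hT : ChannelTransport T e i i') {c v : Fin k → Bool}
    (hcv : ∀ j ≠ i, c j = v j) :
    (∀ j ≠ i', T c j = T v j) ∧ (T c i' ≠ T v i' ↔ c i ≠ v i) := by
  by_cases hi : c i = v i
  · have : c = v := funext fun j => if hj : j = i then hj ▸ hi else hcv j hj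
    simp [this]
  · have : c = flipBit i v := by
      funext j
      by_cases hj : j = i
      · subst hj
        simpa [flipBit] using Bool.eq_not.2 hi
      · simp [flipBit, hj, hcv j hj]
    subst this
    rw [hT.apply_flipBit]
    exact ⟨fun j hj => by simp [flipBit, hj], by simp [flipBit]⟩

theorem map_mem_channelOut (hT : ChannelTransport T e i i') {s : Fin n → Fin (k + 1)}
    {y : Fin n → Option (Fin (k + 1))} (hy : y ∈ channelOut k n i s) :
    (fun p => (y p).map e) ∈ channelOut k n i' (e ∘ s) := by
  obtain ⟨r, hdist, hrows, hy⟩ := hy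
  have hcol (p : Fin n) := hT.apply_of_eqOn (c := fun j => r j p) (v := letterCol k (s p))
    fun j hj => congrFun (hrows j hj) p
  simp only [hT.apply_letterCol] at hcol
  refine ⟨fun j p => T (fun j => r j p) j, ?_, fun j hj => funext fun p => (hcol p).1 j hj,
    fun p => (congrArg (Option.map e) (hy p)).trans (hT.reconOpt_apply _).symm⟩
  exact (hammingDist_congr fun p => (hcol p).2).trans_le hdist

theorem isCECC_preimage (hT : ChannelTransport T e i i') {C : Set (Fin n → Fin (k + 1))}
    (hC : isCECC k n i' C) : isCECC k n i ((e ∘ ·) ⁻¹' C) := by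
  intro c hc c' hc' hne
  refine Set.disjoint_left.2 fun y hy hy' => ?_
  exact Set.disjoint_left.1 (hC _ hc _ hc' (e.injective.comp_left.ne hne))
    (hT.map_mem_channelOut hy) (hT.map_mem_channelOut hy')

theorem maxCECC_eq (hT : ChannelTransport T e i i') : maxCECC k n i = maxCECC k n i' := by
  unfold maxCECC
  congr 1
  ext m
  constructor
  · rintro ⟨C, hC, rfl⟩
    exact ⟨_, hT.symm.isCECC_preimage hC, ncard_preimage_comp_equiv _ C⟩
  · rintro ⟨C, hC, rfl⟩
    exact ⟨_, hT.isCECC_preimage hC, ncard_preimage_comp_equiv _ C⟩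

end ChannelTransport

section Shift

variable {m : ℕ}

def shiftCol (c : Fin (m + 1) → Bool) : Fin (m + 1) → Bool :=
  fun j => xor (Fin.cons (α := fun _ => Bool) false (Fin.init c) j) (!c (Fin.last m))

theorem shiftCol_injective : Function.Injective (shiftCol (m := m)) := by
  intro c c' h
  have hlast : c (Fin.last m) = c' (Fin.last m) := by simpa [shiftCol] using congrFun h 0
  funext j
  induction j using Fin.lastCases with
  | last => exact hlast
  | cast j => simpa [shiftCol, hlast, Fin.init] using congrFun h j.succ

theorem shiftCol_letterCol (a : Fin (m + 2)) :
    shiftCol (letterCol (m + 1) a) = letterCol (m + 1) (a - 1) := by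
  funext j
  have ha := a.isLt
  have ha0 : a = 0 ↔ (a : ℕ) = 0 := Fin.ext_iff
  rw [Bool.eq_iff_iff]
  induction j using Fin.cases with
  | zero =>
    simp only [shiftCol, letterCol, Fin.coe_sub_one, Fin.cons_zero, Fin.val_zero, Fin.val_last, ha0]
    by_cases h : (a : ℕ) = 0 <;> simp [h]
    omega
  | succ j =>
    have hj := j.isLt
    simp only [shiftCol, letterCol, Fin.coe_sub_one, Fin.cons_succ, Fin.init, Fin.val_succ,
      Fin.val_castSucc, Fin.val_last, ha0]
    by_cases h : (a : ℕ) = 0 <;> simp [h] <;> omega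

theorem shiftCol_flipBit (i : Fin m) (c : Fin (m + 1) → Bool) :
    shiftCol (flipBit i.castSucc c) = flipBit i.succ (shiftCol c) := by
  funext j
  induction j using Fin.cases with
  | zero =>
    simp [shiftCol, flipBit, (Fin.castSucc_lt_last i).ne', (Fin.succ_ne_zero i).symm]
  | succ j =>
    simp only [shiftCol, flipBit, Fin.cons_succ, Fin.init, Function.update_apply,
      Fin.castSucc_inj, Fin.succ_inj, (Fin.castSucc_lt_last i).ne', if_false]
    split_ifs <;> simp_all

noncomputable def shiftEquiv (m : ℕ) : (Fin (m + 1) → Bool) ≃ (Fin (m + 1) → Bool) :=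
  Equiv.ofBijective shiftCol (Finite.injective_iff_bijective.1 shiftCol_injective)

theorem channelTransport_shiftEquiv (i : Fin m) :
    ChannelTransport (shiftEquiv m) (Equiv.subRight 1) i.castSucc i.succ where
  apply_letterCol := shiftCol_letterCol
  apply_flipBit := shiftCol_flipBit i

end Shift

/-- If there is a code `C ⊆ {0,…,k}^n` correcting any single substitution error in
channel `i`, then there is a code `C'` of the same cardinality correcting any single
substitution error in channel `i+1`; in particular the maximal cardinalities
`S_k(n; e_i)` are equal for all channels `i ∈ {0,…,k-1}`. -/
theorem stmt_19 (k n : ℕ) (i : ℕ) (hi : i + 1 < k)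
    (C : Set (Fin n → Fin (k + 1)))
    (hC : isCECC k n ⟨i, Nat.lt_of_succ_lt hi⟩ C) :
    (∃ C' : Set (Fin n → Fin (k + 1)),
        C'.ncard = C.ncard ∧ isCECC k n ⟨i + 1, hi⟩ C') ∧
    ∀ a b : Fin k, maxCECC k n a = maxCECC k n b := by
  obtain ⟨m, rfl⟩ : ∃ m, k = m + 1 := ⟨k - 1, by omega⟩
  have adjacent (j : Fin m) : maxCECC (m + 1) n j.castSucc = maxCECC (m + 1) n j.succ :=
    (channelTransport_shiftEquiv j).maxCECC_eq
  have eq_zero (a : Fin (m + 1)) : maxCECC (m + 1) n a = maxCECC (m + 1) n 0 :=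
    Fin.induction rfl (fun j hj => (adjacent j).symm.trans hj) a
  exact ⟨⟨_, ncard_preimage_comp_equiv _ C,
    (channelTransport_shiftEquiv (⟨i, by omega⟩ : Fin m)).symm.isCECC_preimage hC⟩,
    fun a b => (eq_zero a).trans (eq_zero b).symm⟩
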